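/- An m-order n-dimensional real tensor A is semi-positive if and only if there exists an entrywise nonnegative vector x ≥ 0 in ℝ^n such that A x^{m-1} > 0 entrywise. -/

import Mathlib

noncomputable section

/-- The tensor-vector product `(A x^{m-1})_i` for an `m`-order, `n`-dimensional real tensor,
represented as `A : Fin n → (Fin (m-1) → Fin n) → ℝ` (first index, then the remaining indices). -/
def tmul {n k : ℕ} (A : Fin n → (Fin k → Fin n) → ℝ) (x : Fin n → ℝ) (i : Fin n) : ℝ :=
  ∑ js : Fin k → Fin n, A i js * ∏ j, x (js j)

/-- A tensor is semi-positive if there is an entrywise positive `x` with `A x^{m-1} > 0`. -/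
def SemiPositive {n k : ℕ} (A : Fin n → (Fin k → Fin n) → ℝ) : Prop :=
  ∃ x : Fin n → ℝ, (∀ i, 0 < x i) ∧ ∀ i, 0 < tmul A x i

/-- The complex tensor-vector product. -/
def ctprod {n k : ℕ} (A : Fin n → (Fin k → Fin n) → ℝ) (x : Fin n → ℂ) (i : Fin n) : ℂ :=
  ∑ js : Fin k → Fin n, (A i js : ℂ) * ∏ j, x (js j)

/-- `lam` is an eigenvalue of `A` if `A x^{m-1} = lam x^{[m-1]}` for some nonzero complex `x`. -/
def IsEigenvalue {n k : ℕ} (A : Fin n → (Fin k → Fin n) → ℝ) (lam : ℂ) : Prop :=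
  ∃ x : Fin n → ℂ, x ≠ 0 ∧ ∀ i, ctprod A x i = lam * x i ^ k

/-- The spectral radius: the maximum modulus of the eigenvalues. -/
def specRad {n k : ℕ} (A : Fin n → (Fin k → Fin n) → ℝ) : ℝ :=
  sSup ((fun (lam : ℂ) => ‖lam‖) '' {lam | IsEigenvalue A lam})

/-- The unit tensor: diagonal entries 1, off-diagonal entries 0. -/
def unitT (n k : ℕ) : Fin n → (Fin k → Fin n) → ℝ :=
  fun i js => if js = (fun _ => i) then 1 else 0

/-- A Z-tensor: all off-diagonal entries are nonpositive. -/
def ZTensor {n k : ℕ} (A : Fin n → (Fin k → Fin n) → ℝ) : Prop :=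
  ∀ i js, js ≠ (fun _ => i) → A i js ≤ 0

/-- A monotone tensor: `A x^{m-1} ≥ 0` implies `x ≥ 0`. -/
def MonotoneT {n k : ℕ} (A : Fin n → (Fin k → Fin n) → ℝ) : Prop :=
  ∀ x : Fin n → ℝ, (∀ i, 0 ≤ tmul A x i) → ∀ i, 0 ≤ x i


/-- A tensor is semi-positive iff there exists `x ≥ 0` with `A x^{m-1} > 0`. -/
theorem stmt0 {n m : ℕ} (hm : 2 ≤ m) (A : Fin n → (Fin (m-1) → Fin n) → ℝ) :
    SemiPositive A ↔
      ∃ x : Fin n → ℝ, (∀ i, 0 ≤ x i) ∧ ∀ i, 0 < tmul A x i := by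
  constructor
  · rintro ⟨x, hx, hAx⟩
    exact ⟨x, fun i => (hx i).le, hAx⟩
  · rintro ⟨x, hx, hAx⟩
    have hc : ∀ i, ContinuousAt (fun ε : ℝ => tmul A (fun j => x j + ε) i) 0 := by
      intro i
      apply Continuous.continuousAt
      unfold tmul
      exact continuous_finset_sum _ fun js _ =>
        (continuous_const.mul (continuous_finset_prod _ fun j _ => by fun_prop))
    have hev : ∀ᶠ ε in nhds (0:ℝ), ∀ i, 0 < tmul A (fun j => x j + ε) i := by
      rw [Filter.eventually_all]
      intro i
      have h0 : 0 < (fun ε : ℝ => tmul A (fun j => x j + ε) i) 0 := by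
        simpa using hAx i
      exact (hc i).eventually (eventually_gt_nhds h0)
    have hev' : ∀ᶠ ε in nhdsWithin (0:ℝ) (Set.Ioi 0),
        (∀ i, 0 < tmul A (fun j => x j + ε) i) ∧ ε ∈ Set.Ioi (0:ℝ) :=
      (hev.filter_mono nhdsWithin_le_nhds).and eventually_mem_nhdsWithin
    obtain ⟨ε, hε1, hε2⟩ := hev'.exists
    exact ⟨fun j => x j + ε, fun i => add_pos_of_nonneg_of_pos (hx i) hε2, hε1⟩
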